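/- arXiv:1612.00426 — 4 statements merged into one kernel-verified Lean document; each statement's English description precedes it below -/
import Mathlib

section
/- For every positive integer n, the joint distribution of (des, maj) over the symmetric group S_n equals the joint distribution of (stc, inv): sum over w in S_n of x^{des(w)} q^{maj(w)} equals sum over w in S_n of x^{stc(w)} q^{inv(w)}. -/
open Finset

/-- Descent set of a word (1-based positions: `i ∈ desSet w` iff `1 ≤ i ≤ n-1` and `w_i > w_{i+1}`). -/
def desSet {α : Type*} [LinearOrder α] {n : ℕ} (w : Fin n → α) : Finset ℕ :=
  (Finset.Ico 1 n).filter fun i =>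
    ∃ h : i < n, w ⟨i, h⟩ < w ⟨i - 1, Nat.lt_of_le_of_lt (Nat.sub_le i 1) h⟩

def desStat {α : Type*} [LinearOrder α] {n : ℕ} (w : Fin n → α) : ℕ := (desSet w).card

def majStat {α : Type*} [LinearOrder α] {n : ℕ} (w : Fin n → α) : ℕ := ∑ i ∈ desSet w, i

def invStat {α : Type*} [LinearOrder α] {n : ℕ} (w : Fin n → α) : ℕ :=
  ((Finset.univ : Finset (Fin n × Fin n)).filter fun p => p.1 < p.2 ∧ w p.2 < w p.1).card

/-- Lehmer code. -/
def lehmer {α : Type*} [LinearOrder α] {n : ℕ} (w : Fin n → α) (i : Fin n) : ℕ :=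
  (Finset.univ.filter fun j => i < j ∧ w j < w i).card

/-- `c` contains a subsequence of length `r` which is entrywise strictly greater than
the staircase `(r-1, r-2, ..., 1, 0)`, i.e. the entry at (1-based) place `k` exceeds `r - k`. -/
def hasStaircase {n : ℕ} (c : Fin n → ℕ) (r : ℕ) : Prop :=
  ∃ f : Fin r → Fin n, StrictMono f ∧ ∀ k : Fin r, r < c (f k) + (k : ℕ) + 1

noncomputable def stcWord {n : ℕ} (c : Fin n → ℕ) : ℕ := sSup {r | hasStaircase c r}

noncomputable def stcStat {α : Type*} [LinearOrder α] {n : ℕ} (w : Fin n → α) : ℕ := stcWord (lehmer w)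

noncomputable abbrev PP := Polynomial (Polynomial ℤ)
noncomputable def xP : PP := Polynomial.X
noncomputable def qP : PP := Polynomial.C Polynomial.X

/-!
Both generating functions satisfy the recursion `F (n + 1) = Φₙ (F n)`, where `Φₙ` multiplies
`x ^ d * q ^ m` by `∑_{p = 0}^{n} x ^ [d < p] * q ^ p`.

For `(stc, inv)`, split `σ ∈ S_{n+1}` into its first letter `p` and the standardisation `e` of the
rest: the Lehmer code of `σ` is `p` followed by that of `e`, so `inv` grows by `p`, and `stc` grows
by one exactly when `stc e < p` (a longest staircase in the code of `e` can be prefixed by `p`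
exactly when `p` exceeds its length).

For `(des, maj)`, insert the letter `n + 1` into `e ∈ S_n` at each of the `n + 1` slots. The
increase of `maj` labels the slots bijectively by `0, …, n`, and the label exceeds `des e` exactly
when the insertion creates a new descent.
-/

namespace Skandera

open Finset Equiv Polynomial

section Staircase

variable {n : ℕ} {c : Fin n → ℕ}

lemma hasStaircase_zero (c : Fin n → ℕ) : hasStaircase c 0 :=
  ⟨Fin.elim0, fun a => a.elim0, fun k => k.elim0⟩

lemma le_of_hasStaircase {r : ℕ} (h : hasStaircase c r) : r ≤ n := by
  obtain ⟨f, hf, -⟩ := h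
  simpa using Fintype.card_le_of_injective f hf.injective

lemma hasStaircase_of_le {r r' : ℕ} (h : hasStaircase c r) (hr : r' ≤ r) :
    hasStaircase c r' := by
  obtain ⟨f, hf, hc⟩ := h
  refine ⟨fun k => f ⟨k + (r - r'), by omega⟩, fun a b hab => hf ?_, fun k => ?_⟩
  · simp only [Fin.lt_def] at hab ⊢
    omega
  · have := hc ⟨k + (r - r'), by omega⟩
    dsimp only at this ⊢
    omega

lemma hasStaircase_iff_le_stcWord {r : ℕ} : hasStaircase c r ↔ r ≤ stcWord c := by
  have hbdd : BddAbove {r | hasStaircase c r} := ⟨n, fun _ hr => le_of_hasStaircase hr⟩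
  refine ⟨fun h => le_csSup hbdd h, fun h => ?_⟩
  exact hasStaircase_of_le (Nat.sSup_mem ⟨0, hasStaircase_zero c⟩ hbdd) h

lemma stcWord_le (c : Fin n → ℕ) : stcWord c ≤ n :=
  le_of_hasStaircase (hasStaircase_iff_le_stcWord.mpr le_rfl)

lemma hasStaircase_cons_succ_iff {p r : ℕ} :
    hasStaircase (Fin.cons p c : Fin (n + 1) → ℕ) (r + 1) ↔
      hasStaircase c (r + 1) ∨ r < p ∧ hasStaircase c r := by
  constructor
  · rintro ⟨f, hf, hc⟩
    by_cases h0 : f 0 = 0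
    · have hne (k : Fin r) : f k.succ ≠ 0 := (h0 ▸ hf (Fin.succ_pos k)).ne'
      refine Or.inr ⟨by simpa [h0] using hc 0, fun k => (f k.succ).pred (hne k),
        fun a b hab => by simpa using hf (Fin.succ_lt_succ_iff.mpr hab), fun k => ?_⟩
      have := hc k.succ
      rw [← Fin.succ_pred (f k.succ) (hne k), Fin.cons_succ, Fin.val_succ] at this
      dsimp only
      omega
    · have hne (k : Fin (r + 1)) : f k ≠ 0 :=
        fun hk => h0 (le_antisymm (hk ▸ hf.monotone (Fin.zero_le k)) (Fin.zero_le _))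
      refine Or.inl ⟨fun k => (f k).pred (hne k), fun a b hab => by simpa using hf hab,
        fun k => ?_⟩
      have := hc k
      rwa [← Fin.succ_pred (f k) (hne k), Fin.cons_succ] at this
  · rintro (⟨f, hf, hc⟩ | ⟨hp, f, hf, hc⟩)
    · exact ⟨Fin.succ ∘ f, Fin.strictMono_succ.comp hf, fun k => by simpa using hc k⟩
    · refine ⟨Fin.cons 0 (Fin.succ ∘ f),
        Fin.strictMono_cons.mpr ⟨fun k => Fin.succ_pos _, Fin.strictMono_succ.comp hf⟩,
        fun k => ?_⟩
      cases k using Fin.cases with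
      | zero => simpa using hp
      | succ k =>
        have := hc k
        simp only [Fin.cons_succ, Function.comp_apply, Fin.val_succ]
        omega

lemma stcWord_cons (p : ℕ) (c : Fin n → ℕ) :
    stcWord (Fin.cons p c : Fin (n + 1) → ℕ) = stcWord c + if stcWord c < p then 1 else 0 := by
  refine eq_of_forall_le_iff fun r => ?_
  rw [← hasStaircase_iff_le_stcWord]
  cases r with
  | zero => simpa using hasStaircase_zero _
  | succ r =>
    rw [hasStaircase_cons_succ_iff, hasStaircase_iff_le_stcWord, hasStaircase_iff_le_stcWord]
    split_ifs <;> omega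

end Staircase

section Words

variable {α β : Type*} [LinearOrder α] [LinearOrder β] {n : ℕ}

lemma lehmer_comp_strictMono {f : α → β} (hf : StrictMono f) (w : Fin n → α) :
    lehmer (f ∘ w) = lehmer w := by
  funext i
  simp [lehmer, hf.lt_iff_lt]

lemma desSet_comp_strictMono {f : α → β} (hf : StrictMono f) (w : Fin n → α) :
    desSet (f ∘ w) = desSet w := by
  simp [desSet, hf.lt_iff_lt]

lemma desStat_comp_strictMono {f : α → β} (hf : StrictMono f) (w : Fin n → α) :
    desStat (f ∘ w) = desStat w := by
  rw [desStat, desStat, desSet_comp_strictMono hf]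

lemma majStat_comp_strictMono {f : α → β} (hf : StrictMono f) (w : Fin n → α) :
    majStat (f ∘ w) = majStat w := by
  rw [majStat, majStat, desSet_comp_strictMono hf]

lemma lehmer_cons (a : α) (w : Fin n → α) :
    lehmer (Fin.cons a w : Fin (n + 1) → α) = Fin.cons #{j | w j < a} (lehmer w) := by
  funext i
  cases i using Fin.cases <;>
    simp only [lehmer, Finset.card_filter, Fin.sum_univ_succ] <;> simp [lehmer, Fin.succ_pos]

lemma invStat_eq_sum_lehmer (w : Fin n → α) : invStat w = ∑ i, lehmer w i := by
  simp only [invStat, lehmer, Finset.card_filter, Fintype.sum_prod_type]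

lemma mem_desSet {w : Fin n → α} {i : ℕ} :
    i ∈ desSet w ↔ ∃ h : i < n, 0 < i ∧ w ⟨i, h⟩ < w ⟨i - 1, by omega⟩ := by
  simp only [desSet, mem_filter, mem_Ico]
  exact ⟨fun ⟨⟨h1, _⟩, h, hw⟩ => ⟨h, h1, hw⟩, fun ⟨h, h1, hw⟩ => ⟨⟨h1, h⟩, h, hw⟩⟩

lemma zero_notMem_desSet (w : Fin n → α) : 0 ∉ desSet w := fun h => by
  obtain ⟨_, h0, _⟩ := mem_desSet.mp h
  exact lt_irrefl 0 h0

lemma lt_of_mem_desSet {w : Fin n → α} {t : ℕ} (h : t ∈ desSet w) : t < n :=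
  (mem_desSet.mp h).1

lemma desSet_snoc {w : Fin n → α} {top : α} (htop : ∀ i, w i < top) :
    desSet (Fin.snoc w top : Fin (n + 1) → α) = desSet w := by
  ext i
  simp only [mem_desSet]
  constructor
  · rintro ⟨h, hi, hw⟩
    have hin : i < n := by
      by_contra hin
      obtain rfl : n = i := by omega
      rw [show (⟨n, h⟩ : Fin (n + 1)) = Fin.last n from rfl, Fin.snoc_last,
        show (⟨n - 1, _⟩ : Fin (n + 1)) = Fin.castSucc ⟨n - 1, by omega⟩ from rfl,
        Fin.snoc_castSucc] at hw
      exact (htop _).not_gt hw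
    refine ⟨hin, hi, ?_⟩
    rwa [show (⟨i, h⟩ : Fin (n + 1)) = Fin.castSucc ⟨i, hin⟩ from rfl,
      show (⟨i - 1, _⟩ : Fin (n + 1)) = Fin.castSucc ⟨i - 1, by omega⟩ from rfl,
      Fin.snoc_castSucc, Fin.snoc_castSucc] at hw
  · rintro ⟨h, hi, hw⟩
    refine ⟨by omega, hi, ?_⟩
    rwa [show (⟨i, _⟩ : Fin (n + 1)) = Fin.castSucc ⟨i, h⟩ from rfl,
      show (⟨i - 1, _⟩ : Fin (n + 1)) = Fin.castSucc ⟨i - 1, by omega⟩ from rfl,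
      Fin.snoc_castSucc, Fin.snoc_castSucc]

end Words

section InsertNth

variable {α : Type*} {n : ℕ} (j : Fin n) (top : α) (w : Fin n → α)

lemma insertNth_castSucc_apply_of_lt {m : ℕ} (hm : m < j) :
    (Fin.insertNth j.castSucc top w : Fin (n + 1) → α) ⟨m, by omega⟩ = w ⟨m, by omega⟩ := by
  rw [← Fin.insertNth_apply_succAbove (α := fun _ => α) j.castSucc top w ⟨m, by omega⟩,
    Fin.succAbove_of_castSucc_lt _ _ (by simpa [Fin.lt_def] using hm)]
  rfl

lemma insertNth_castSucc_apply_of_eq {m : ℕ} (hm : m = j) (hmn : m < n + 1) :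
    (Fin.insertNth j.castSucc top w : Fin (n + 1) → α) ⟨m, hmn⟩ = top := by
  subst hm
  exact Fin.insertNth_apply_same _ _ _

lemma insertNth_castSucc_apply_of_gt {m : ℕ} (hm : j < m) (hmn : m < n + 1) :
    (Fin.insertNth j.castSucc top w : Fin (n + 1) → α) ⟨m, hmn⟩ = w ⟨m - 1, by omega⟩ := by
  rw [← Fin.insertNth_apply_succAbove (α := fun _ => α) j.castSucc top w ⟨m - 1, by omega⟩,
    Fin.succAbove_of_le_castSucc _ _ (by simp [Fin.le_def]; omega)]
  congr 1
  ext
  simp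
  omega

end InsertNth

lemma sum_eq_sum_filter_lt_add_sum_filter_gt {M : Type*} [AddCommMonoid M] (D : Finset ℕ)
    (j : ℕ) (f : ℕ → M) :
    ∑ t ∈ D, f t =
      ∑ t ∈ D.filter (· < j), f t + ∑ t ∈ D.filter (j < ·), f t + if j ∈ D then f j else 0 := by
  rw [← sum_filter_add_sum_filter_not D (· < j), add_assoc,
    ← sum_filter_add_sum_filter_not (D.filter (¬ · < j)) (j < ·), filter_filter, filter_filter]
  have hgt : D.filter (fun t => ¬ t < j ∧ j < t) = D.filter (j < ·) :=
    filter_congr fun t _ => by omega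
  have heq : D.filter (fun t => ¬ t < j ∧ ¬ j < t) = D.filter (· = j) :=
    filter_congr fun t _ => by omega
  rw [hgt, heq, filter_eq']
  split_ifs <;> simp

/-- Inserting a new maximum in front of position `j` of a word with descent set `D` raises `maj`
by `insertionLabel D j + 1`. -/
def insertionLabel (D : Finset ℕ) (j : ℕ) : ℕ := #(D.filter (j < ·)) + if j ∈ D then 0 else j

section InsertionLabel

variable {D : Finset ℕ} {a b j : ℕ}

lemma insertionLabel_lt {n : ℕ} (hD : ∀ t ∈ D, t < n) (hj : j < n) : insertionLabel D j < n := by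
  have : #(D.filter (j < ·)) ≤ #(Ioo j n) :=
    card_le_card fun t ht => by simp only [mem_filter, mem_Ioo] at ht ⊢; exact ⟨ht.2, hD t ht.1⟩
  rw [Nat.card_Ioo] at this
  unfold insertionLabel
  split_ifs <;> omega

lemma card_le_insertionLabel_iff (h0 : 0 ∉ D) : #D ≤ insertionLabel D j ↔ j ∉ D := by
  unfold insertionLabel
  by_cases hj : j ∈ D
  · simp only [hj, if_true, add_zero, not_true_eq_false, iff_false, not_le]
    exact card_lt_card (filter_ssubset.mpr ⟨j, hj, lt_irrefl j⟩)
  · simp only [hj, if_false, not_false_eq_true, iff_true]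
    have hle : #(D.filter (¬ j < ·)) ≤ #(Ioc 0 j) := card_le_card fun t ht => by
      simp only [mem_filter, mem_Ioc] at ht ⊢
      exact ⟨Nat.pos_of_ne_zero fun h => h0 (h ▸ ht.1), not_lt.mp ht.2⟩
    have := card_filter_add_card_filter_not (s := D) (j < ·)
    rw [Nat.card_Ioc] at hle
    omega

lemma insertionLabel_lt_insertionLabel_of_notMem (ha : a ∉ D) (hb : b ∉ D) (hab : a < b) :
    insertionLabel D a < insertionLabel D b := by
  have : #(D.filter (a < ·)) ≤ #(Ioo a b ∪ D.filter (b < ·)) := card_le_card fun t ht => by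
    simp only [mem_filter, mem_union, mem_Ioo] at ht ⊢
    rcases lt_trichotomy t b with h | rfl | h
    · exact Or.inl ⟨ht.2, h⟩
    · exact absurd ht.1 hb
    · exact Or.inr ⟨ht.1, h⟩
  have hu := card_union_le (Ioo a b) (D.filter (b < ·))
  rw [Nat.card_Ioo] at hu
  simp only [insertionLabel, ha, hb, if_false]
  omega

lemma insertionLabel_lt_insertionLabel_of_mem (ha : a ∈ D) (hb : b ∈ D) (hab : a < b) :
    insertionLabel D b < insertionLabel D a := by
  simp only [insertionLabel, ha, hb, if_true, add_zero]
  refine card_lt_card (ssubset_iff_of_subset (fun t ht => ?_) |>.mpr ⟨b, ?_, ?_⟩)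
  · simp only [mem_filter] at ht ⊢
    exact ⟨ht.1, hab.trans ht.2⟩
  · simpa using ⟨hb, hab⟩
  · simp

lemma insertionLabel_injective (h0 : 0 ∉ D) : Function.Injective (insertionLabel D) := by
  intro a b hab
  have hmem : a ∈ D ↔ b ∈ D := by
    rw [← not_iff_not, ← card_le_insertionLabel_iff h0, ← card_le_insertionLabel_iff h0, hab]
  by_contra hne
  rcases Nat.lt_or_gt_of_ne hne with h | h <;> by_cases ha : a ∈ D
  · exact (insertionLabel_lt_insertionLabel_of_mem ha (hmem.mp ha) h).ne' hab
  · exact (insertionLabel_lt_insertionLabel_of_notMem ha (hmem.not.mp ha) h).ne hab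
  · exact (insertionLabel_lt_insertionLabel_of_mem (hmem.mp ha) ha h).ne' hab.symm
  · exact (insertionLabel_lt_insertionLabel_of_notMem (hmem.not.mp ha) ha h).ne hab.symm

lemma sum_insertionLabel {M : Type*} [AddCommMonoid M] {n : ℕ} (h0 : 0 ∉ D)
    (hD : ∀ t ∈ D, t < n) (g : ℕ → M) :
    ∑ j : Fin n, g (insertionLabel D j) = ∑ j : Fin n, g j := by
  let label : Fin n → Fin n := fun j => ⟨insertionLabel D j, insertionLabel_lt hD j.2⟩
  have hinj : label.Injective := fun a b h =>
    Fin.ext (insertionLabel_injective h0 (congrArg Fin.val h))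
  exact Fintype.sum_bijective label (Finite.injective_iff_bijective.mp hinj) _ _ fun _ => rfl

end InsertionLabel

section Descents

variable {α : Type*} [LinearOrder α] {n : ℕ}

lemma desSet_insertNth_castSucc {w : Fin n → α} {top : α} (htop : ∀ i, w i < top)
    (j : Fin n) :
    desSet (Fin.insertNth j.castSucc top w : Fin (n + 1) → α) =
      (desSet w).filter (· < (j : ℕ)) ∪
        (insert (j : ℕ) ((desSet w).filter ((j : ℕ) < ·))).map (addRightEmbedding 1) := by
  ext i
  simp only [mem_union, mem_filter, mem_map, mem_insert, addRightEmbedding_apply, mem_desSet]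
  rcases lt_trichotomy i j with hij | rfl | hij
  · have h1 : i - 1 < j := by omega
    simp only [insertNth_castSucc_apply_of_lt _ _ _ hij, insertNth_castSucc_apply_of_lt _ _ _ h1]
    constructor
    · rintro ⟨_, hi, hw⟩
      exact Or.inl ⟨⟨by omega, hi, hw⟩, hij⟩
    · rintro (⟨⟨_, hi, hw⟩, -⟩ | ⟨a, ha, rfl⟩)
      · exact ⟨by omega, hi, hw⟩
      · omega
  · refine iff_of_false (fun ⟨_, hi, hw⟩ => ?_) (by omega)
    rw [insertNth_castSucc_apply_of_eq _ _ _ rfl,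
      insertNth_castSucc_apply_of_lt _ _ _ (show (j : ℕ) - 1 < j by omega)] at hw
    exact (htop _).not_gt hw
  · obtain rfl | hij' : i = j + 1 ∨ (j : ℕ) + 1 < i := by omega
    · refine iff_of_true ⟨by omega, by omega, ?_⟩ (Or.inr ⟨j, Or.inl rfl, rfl⟩)
      rw [insertNth_castSucc_apply_of_gt _ _ _ hij,
        insertNth_castSucc_apply_of_eq _ _ _ (by omega)]
      exact htop _
    · have h2 : (j : ℕ) < i - 1 := by omega
      simp only [insertNth_castSucc_apply_of_gt _ _ _ hij,
        insertNth_castSucc_apply_of_gt _ _ _ h2]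
      constructor
      · rintro ⟨_, _, hw⟩
        exact Or.inr ⟨i - 1, Or.inr ⟨⟨by omega, by omega, hw⟩, h2⟩, by omega⟩
      · rintro (⟨-, hji⟩ | ⟨a, ha | ⟨⟨_, _, hw⟩, _⟩, rfl⟩)
        · omega
        · omega
        · exact ⟨by omega, by omega, hw⟩

variable {w : Fin n → α} {top : α}

lemma sum_desSet_insertNth_castSucc (htop : ∀ i, w i < top) (j : Fin n) {M : Type*}
    [AddCommMonoid M] (f : ℕ → M) :
    ∑ t ∈ desSet (Fin.insertNth j.castSucc top w : Fin (n + 1) → α), f t =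
      ∑ t ∈ (desSet w).filter (· < (j : ℕ)), f t +
        ∑ t ∈ (desSet w).filter ((j : ℕ) < ·), f (t + 1) + f (j + 1) := by
  have hdisj : Disjoint ((desSet w).filter (· < (j : ℕ)))
      ((insert (j : ℕ) ((desSet w).filter ((j : ℕ) < ·))).map (addRightEmbedding 1)) := by
    simp only [disjoint_left, mem_filter, mem_map, mem_insert, addRightEmbedding_apply]
    omega
  rw [desSet_insertNth_castSucc htop, sum_union hdisj, sum_map,
    sum_insert (by simp), add_assoc, add_comm (f _)]
  rfl

lemma desStat_insertNth_castSucc (htop : ∀ i, w i < top) (j : Fin n) :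
    desStat (Fin.insertNth j.castSucc top w : Fin (n + 1) → α) =
      desStat w + if (j : ℕ) ∈ desSet w then 0 else 1 := by
  have h := sum_eq_sum_filter_lt_add_sum_filter_gt (desSet w) j fun _ => 1
  simp only [desStat, card_eq_sum_ones, sum_desSet_insertNth_castSucc htop j] at h ⊢
  split_ifs at h ⊢ <;> omega

lemma majStat_insertNth_castSucc (htop : ∀ i, w i < top) (j : Fin n) :
    majStat (Fin.insertNth j.castSucc top w : Fin (n + 1) → α) =
      majStat w + insertionLabel (desSet w) j + 1 := by
  have h := sum_eq_sum_filter_lt_add_sum_filter_gt (desSet w) j id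
  simp only [majStat, insertionLabel, sum_desSet_insertNth_castSucc htop j, sum_add_distrib,
    card_eq_sum_ones] at h ⊢
  split_ifs at h ⊢ <;> simp only [id] at h <;> omega

end Descents

section Permutations

variable {n : ℕ}

def permCons (p : Fin (n + 1)) (e : Perm (Fin n)) : Perm (Fin (n + 1)) :=
  (finSuccEquiv n).trans (e.optionCongr.trans (finSuccEquiv' p).symm)

def permInsertLast (k : Fin (n + 1)) (e : Perm (Fin n)) : Perm (Fin (n + 1)) :=
  (finSuccEquiv' k).trans (e.optionCongr.trans finSuccEquivLast.symm)

lemma coe_permCons (p : Fin (n + 1)) (e : Perm (Fin n)) :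
    ⇑(permCons p e) = Fin.cons p (p.succAbove ∘ e) := by
  funext i
  cases i using Fin.cases <;> simp [permCons, finSuccEquiv'_symm_some]

lemma coe_permInsertLast (k : Fin (n + 1)) (e : Perm (Fin n)) :
    ⇑(permInsertLast k e) = Fin.insertNth k (Fin.last n) (Fin.castSucc ∘ e) := by
  refine Fin.eq_insertNth_iff.mpr ⟨by simp [permInsertLast, finSuccEquiv'_at], funext fun i => ?_⟩
  simp [Fin.removeNth, permInsertLast, finSuccEquiv'_succAbove, finSuccEquivLast_symm_some]

lemma sum_perm_succ_eq_sum_permCons {M : Type*} [AddCommMonoid M] (f : Perm (Fin (n + 1)) → M) :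
    ∑ σ, f σ = ∑ e, ∑ p, f (permCons p e) := by
  have hinj : Function.Injective fun pe : Fin (n + 1) × Perm (Fin n) => permCons pe.1 pe.2 := by
    rintro ⟨p, e⟩ ⟨p', e'⟩ h
    have h' := congrArg DFunLike.coe h
    simp only [coe_permCons, Fin.cons_inj] at h'
    obtain ⟨rfl, he⟩ := h'
    simp only [Prod.mk.injEq, true_and]
    exact DFunLike.coe_injective ((Fin.strictMono_succAbove p).injective.comp_left he)
  have hbij := (Fintype.bijective_iff_injective_and_card _).mpr
    ⟨hinj, by simp [Fintype.card_perm, Nat.factorial_succ]⟩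
  rw [← Fintype.sum_bijective _ hbij _ _ fun _ => rfl, Fintype.sum_prod_type_right]

lemma sum_perm_succ_eq_sum_permInsertLast {M : Type*} [AddCommMonoid M]
    (f : Perm (Fin (n + 1)) → M) : ∑ σ, f σ = ∑ e, ∑ k, f (permInsertLast k e) := by
  have hinj : Function.Injective fun ke : Fin (n + 1) × Perm (Fin n) =>
      permInsertLast ke.1 ke.2 := by
    rintro ⟨k, e⟩ ⟨k', e'⟩ h
    have h' := congrArg DFunLike.coe h
    simp only [coe_permInsertLast] at h'
    obtain rfl : k = k' := by
      by_contra hne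
      obtain ⟨i, hi⟩ := Fin.exists_succAbove_eq hne
      have := congrFun h' k
      conv_rhs at this => rw [← hi, Fin.insertNth_apply_succAbove]
      rw [Fin.insertNth_apply_same] at this
      exact (Fin.castSucc_lt_last _).ne this.symm
    have he := Fin.insertNth_right_injective _ h'
    simp only [Prod.mk.injEq, true_and]
    exact DFunLike.coe_injective ((Fin.castSucc_injective n).comp_left he)
  have hbij := (Fintype.bijective_iff_injective_and_card _).mpr
    ⟨hinj, by simp [Fintype.card_perm, Nat.factorial_succ]⟩
  rw [← Fintype.sum_bijective _ hbij _ _ fun _ => rfl, Fintype.sum_prod_type_right]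

lemma card_filter_succAbove_lt (p : Fin (n + 1)) (e : Perm (Fin n)) :
    #{j | p.succAbove (e j) < p} = p := by
  rw [card_filter, Equiv.sum_comp e fun v => if p.succAbove v < p then 1 else 0, ← card_filter]
  simp only [Fin.succAbove_lt_iff_castSucc_lt]
  simp only [Fin.lt_def, Fin.val_castSucc, Fin.card_filter_val_lt]
  omega

lemma lehmer_permCons (p : Fin (n + 1)) (e : Perm (Fin n)) :
    lehmer ⇑(permCons p e) = Fin.cons (p : ℕ) (lehmer ⇑e) := by
  rw [coe_permCons, lehmer_cons, lehmer_comp_strictMono (Fin.strictMono_succAbove p),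
    Function.comp_def, card_filter_succAbove_lt]

lemma stcStat_permCons (p : Fin (n + 1)) (e : Perm (Fin n)) :
    stcStat ⇑(permCons p e) = stcStat ⇑e + if stcStat ⇑e < p then 1 else 0 := by
  rw [stcStat, lehmer_permCons, stcWord_cons, stcStat]

lemma invStat_permCons (p : Fin (n + 1)) (e : Perm (Fin n)) :
    invStat ⇑(permCons p e) = invStat ⇑e + p := by
  rw [invStat_eq_sum_lehmer, lehmer_permCons, Fin.sum_cons, invStat_eq_sum_lehmer, add_comm]

noncomputable def insertionFactor (n d : ℕ) : PP :=
  ∑ p : Fin (n + 1), xP ^ (if d < (p : ℕ) then 1 else 0) * qP ^ (p : ℕ)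

lemma sum_permCons (e : Perm (Fin n)) :
    ∑ p, xP ^ stcStat ⇑(permCons p e) * qP ^ invStat ⇑(permCons p e) =
      xP ^ stcStat ⇑e * qP ^ invStat ⇑e * insertionFactor n (stcStat ⇑e) := by
  simp only [stcStat_permCons, invStat_permCons, pow_add, insertionFactor, mul_sum]
  exact sum_congr rfl fun _ _ => by ring

lemma desSet_permInsertLast_last (e : Perm (Fin n)) :
    desSet ⇑(permInsertLast (Fin.last n) e) = desSet ⇑e := by
  rw [coe_permInsertLast, Fin.insertNth_last',
    desSet_snoc (w := Fin.castSucc ∘ e) fun _ => Fin.castSucc_lt_last _,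
    desSet_comp_strictMono Fin.strictMono_castSucc]

lemma desStat_permInsertLast_castSucc (j : Fin n) (e : Perm (Fin n)) :
    desStat ⇑(permInsertLast j.castSucc e) =
      desStat ⇑e + if desStat ⇑e < insertionLabel (desSet ⇑e) j + 1 then 1 else 0 := by
  have hlabel : desStat ⇑e < insertionLabel (desSet ⇑e) j + 1 ↔ (j : ℕ) ∉ desSet ⇑e := by
    rw [Nat.lt_succ_iff, desStat, card_le_insertionLabel_iff (zero_notMem_desSet _)]
  rw [coe_permInsertLast, desStat_insertNth_castSucc
      (w := Fin.castSucc ∘ e) fun _ => Fin.castSucc_lt_last _,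
    desStat_comp_strictMono Fin.strictMono_castSucc, desSet_comp_strictMono Fin.strictMono_castSucc]
  by_cases hj : (j : ℕ) ∈ desSet ⇑e
  · rw [if_pos hj, if_neg (hlabel.not_left.mpr hj)]
  · rw [if_neg hj, if_pos (hlabel.mpr hj)]

lemma majStat_permInsertLast_castSucc (j : Fin n) (e : Perm (Fin n)) :
    majStat ⇑(permInsertLast j.castSucc e) = majStat ⇑e + (insertionLabel (desSet ⇑e) j + 1) := by
  rw [coe_permInsertLast, majStat_insertNth_castSucc
      (w := Fin.castSucc ∘ e) fun _ => Fin.castSucc_lt_last _,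
    majStat_comp_strictMono Fin.strictMono_castSucc, desSet_comp_strictMono Fin.strictMono_castSucc,
    add_assoc]

lemma sum_permInsertLast (e : Perm (Fin n)) :
    ∑ k, xP ^ desStat ⇑(permInsertLast k e) * qP ^ majStat ⇑(permInsertLast k e) =
      xP ^ desStat ⇑e * qP ^ majStat ⇑e * insertionFactor n (desStat ⇑e) := by
  set g : ℕ → PP := fun l => xP ^ (if desStat ⇑e < l + 1 then 1 else 0) * qP ^ (l + 1)
  have hterm (j : Fin n) :
      xP ^ desStat ⇑(permInsertLast j.castSucc e) * qP ^ majStat ⇑(permInsertLast j.castSucc e) =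
        xP ^ desStat ⇑e * qP ^ majStat ⇑e * g (insertionLabel (desSet ⇑e) j) := by
    rw [desStat_permInsertLast_castSucc, majStat_permInsertLast_castSucc, pow_add, pow_add]
    ring
  have hlast : xP ^ desStat ⇑(permInsertLast (Fin.last n) e) *
      qP ^ majStat ⇑(permInsertLast (Fin.last n) e) = xP ^ desStat ⇑e * qP ^ majStat ⇑e := by
    simp only [desStat, majStat, desSet_permInsertLast_last]
  rw [Fin.sum_univ_castSucc, Fintype.sum_congr _ _ hterm, ← mul_sum, hlast,
    sum_insertionLabel (zero_notMem_desSet _) (fun _ => lt_of_mem_desSet) g, insertionFactor,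
    Fin.sum_univ_succ]
  simp only [g, Fin.val_zero, Fin.val_succ, not_lt_zero, if_false, pow_zero, mul_one]
  ring

end Permutations

lemma sum_monomial_mul_eq_of_sum_monomial_eq {R ι κ : Type*} [CommSemiring R]
    {s : Finset ι} {t : Finset κ} {a : ι → ℕ} {b : ι → R} {a' : κ → ℕ} {b' : κ → R}
    (F : ℕ → R[X]) (h : ∑ i ∈ s, monomial (a i) (b i) = ∑ i ∈ t, monomial (a' i) (b' i)) :
    ∑ i ∈ s, monomial (a i) (b i) * F (a i) = ∑ i ∈ t, monomial (a' i) (b' i) * F (a' i) := by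
  let Φ : R[X] →ₗ[R] R[X] := lsum fun m => LinearMap.mulRight R (F m) ∘ₗ monomial m
  have hΦ (m : ℕ) (r : R) : Φ (monomial m r) = monomial m r * F m := by
    simp [Φ, sum_monomial_index]
  simp only [← hΦ, ← map_sum, h]

lemma xP_pow_mul_qP_pow (a b : ℕ) : xP ^ a * qP ^ b = monomial a (X ^ b : ℤ[X]) := by
  rw [xP, qP, ← C_pow, mul_comm, C_mul_X_pow_eq_monomial]

end Skandera

theorem stc_inv_equidistributed_des_maj_general (n : ℕ) :
    ∑ σ : Equiv.Perm (Fin n),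
        xP ^ desStat (fun i => σ i) * qP ^ majStat (fun i => σ i) =
      ∑ σ : Equiv.Perm (Fin n),
        xP ^ stcStat (fun i => σ i) * qP ^ invStat (fun i => σ i) := by
  induction n with
  | zero =>
    refine Fintype.sum_congr _ _ fun σ => ?_
    have hstc := Nat.le_zero.mp (Skandera.stcWord_le (lehmer ⇑σ))
    simp [desStat, majStat, desSet, invStat, stcStat, hstc]
  | succ n ih =>
    rw [Skandera.sum_perm_succ_eq_sum_permInsertLast, Skandera.sum_perm_succ_eq_sum_permCons]
    simp only [Skandera.sum_permInsertLast, Skandera.sum_permCons]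
    simp only [Skandera.xP_pow_mul_qP_pow] at ih ⊢
    exact Skandera.sum_monomial_mul_eq_of_sum_monomial_eq _ ih

/-- Skandera: `(des, maj)` and `(stc, inv)` are equidistributed on `S_n`. -/
theorem stc_inv_equidistributed_des_maj (n : ℕ) (hn : 0 < n) :
    ∑ σ : Equiv.Perm (Fin n),
        xP ^ desStat (fun i => σ i) * qP ^ majStat (fun i => σ i) =
      ∑ σ : Equiv.Perm (Fin n),
        xP ^ stcStat (fun i => σ i) * qP ^ invStat (fun i => σ i) :=
  stc_inv_equidistributed_des_maj_general n
end

section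
/- Let rho = (rho_1, rho_2) be a composition of N and R = {rho_1}. For every permutation w in the quotient S_N^R = {w in S_N : Des(w) ⊆ {rho_1}}, the statistic stc(w) equals the number of positions i in [rho_1] with w(i) > rho_1, i.e., the number of elements from [rho_1+1, N] appearing among the first rho_1 values. -/
open Finset

/-- Permutations of the multiset `{1^{ρ_1}, …, m^{ρ_m}}`, as words of length `N`
in the alphabet `Fin m` with `ρ_j` occurrences of the letter `j`. -/
def multisetPerms (m N : ℕ) (rho : Fin m → ℕ) : Finset (Fin N → Fin m) :=
  Finset.univ.filter fun w => ∀ j : Fin m, (Finset.univ.filter fun i => w i = j).card = rho j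

/-- The set `R = {r_1, …, r_{m-1}}` of partial sums `r_i = ρ_1 + ⋯ + ρ_i` of a composition. -/
def partialSums (m : ℕ) (rho : Fin m → ℕ) : Finset ℕ :=
  (Finset.range (m - 1)).image fun k =>
    ∑ j ∈ Finset.univ.filter (fun j : Fin m => (j : ℕ) ≤ k), rho j

/-- The quotient `S_N^R = {σ ∈ S_N : Des σ ⊆ R}`. -/
def quotientByR (N : ℕ) (R : Finset ℕ) : Finset (Equiv.Perm (Fin N)) :=
  Finset.univ.filter fun σ => desSet (fun i => σ i) ⊆ R

/-- Standardisation of a multiset word: position `i` receives the rank of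
the pair `(w i, i)` in lexicographic order; equivalently, the `ρ_1` letters `1` are
replaced, left to right, by `1, …, ρ_1`, the `ρ_2` letters `2` by `ρ_1 + 1, …, ρ_1 + ρ_2`,
and so on.  It is the inverse of the permutation sorting the (injective) key
`i ↦ (w i, i)`. -/
def stdPerm {m N : ℕ} (w : Fin N → Fin m) : Equiv.Perm (Fin N) :=
  (Tuple.sort fun i => toLex (w i, i))⁻¹

/-!
The Lehmer code of `σ` vanishes on the second block, and at a position `i < ρ₁` it counts the
positions `j ≥ ρ₁` with `σ j < σ i`, because `σ` increases on both blocks. Let `B` be the set of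
positions `i < ρ₁` with `σ i ≥ ρ₁`. As `σ` is a bijection, exactly `|B|` positions `j ≥ ρ₁` carry a
value `< ρ₁`, so the code is at least `|B|` on `B`, and `B` is a staircase of length `|B|`.
Conversely, a staircase of length `r` lies in the first block. If it starts in `B` it stays in `B`;
otherwise its first entry, which is at least `r`, counts positions `j ≥ ρ₁` with `σ j < ρ₁`.
-/

open Equiv

theorem Equiv.Perm.card_filter_and_not_apply_eq {α : Type*} [Fintype α] (σ : Perm α)
    (p : α → Prop) [DecidablePred p] :
    #{i | p i ∧ ¬ p (σ i)} = #{i | ¬ p i ∧ p (σ i)} := by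
  have hcard : #{i | p (σ i)} = #{i | p i} :=
    card_nbij' σ σ.symm (fun i hi => by simpa using hi) (fun i hi => by simpa using hi)
      (fun i _ => by simp) (fun i _ => by simp)
  have h₁ := card_filter_add_card_filter_not (s := {i | p i}) (fun i => p (σ i))
  have h₂ := card_filter_add_card_filter_not (s := {i | p (σ i)}) p
  simp only [filter_filter] at h₁ h₂
  have e₁ : #{i | p (σ i) ∧ p i} = #{i | p i ∧ p (σ i)} := by simp only [and_comm]
  have e₂ : #{i | p (σ i) ∧ ¬ p i} = #{i | ¬ p i ∧ p (σ i)} := by simp only [and_comm]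
  omega

section Descents

variable {α : Type*} [LinearOrder α] {n : ℕ} {w : Fin n → α}

theorem apply_le_apply_of_forall_mem_desSet {i j : Fin n} (hij : i ≤ j)
    (h : ∀ p ∈ desSet w, p ≤ i ∨ j < p) : w i ≤ w j := by
  obtain ⟨j, hj⟩ := j
  simp only [Fin.le_def] at hij
  induction j, hij using Nat.le_induction with
  | base => rfl
  | succ k hik ih =>
    refine (ih (by omega) fun p hp => ?_).trans (not_lt.1 fun hlt => ?_)
    · rcases h p hp with h | h
      · exact .inl h
      · exact .inr (by simp only at h ⊢; omega)
    · have hk : k + 1 ∈ desSet w := mem_filter.2 ⟨mem_Ico.2 ⟨by omega, hj⟩, hj, hlt⟩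
      have := h _ hk
      simp only at this
      omega

theorem apply_le_apply_of_desSet_subset_singleton {m : ℕ} (hw : desSet w ⊆ {m}) {i j : Fin n}
    (hij : i ≤ j) (hblock : (j : ℕ) < m ∨ m ≤ i) : w i ≤ w j :=
  apply_le_apply_of_forall_mem_desSet hij fun p hp => by
    rw [mem_singleton.1 (hw hp)]
    omega

theorem lehmer_eq_zero_of_desSet_subset_singleton {m : ℕ} (hw : desSet w ⊆ {m}) {i : Fin n}
    (hi : m ≤ i) : lehmer w i = 0 :=
  card_eq_zero.2 <| filter_eq_empty_iff.2 fun _ _ ⟨hij, hlt⟩ =>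
    (apply_le_apply_of_desSet_subset_singleton hw hij.le (.inr hi)).not_gt hlt

end Descents

theorem hasStaircase_card {n : ℕ} {c : Fin n → ℕ} (s : Finset (Fin n))
    (hs : ∀ i ∈ s, #s ≤ c i) : hasStaircase c #s :=
  ⟨s.orderEmbOfFin rfl, (s.orderEmbOfFin rfl).strictMono, fun k => by
    have := hs _ (s.orderEmbOfFin_mem rfl k)
    omega⟩

section TwoBlocks

variable {N m : ℕ} (σ : Perm (Fin N))

theorem card_filter_lt_le_apply_eq :
    #{j : Fin N | (j : ℕ) < m ∧ m ≤ (σ j : ℕ)} = #{j : Fin N | m ≤ (j : ℕ) ∧ (σ j : ℕ) < m} := by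
  simpa only [not_lt] using σ.card_filter_and_not_apply_eq fun j => (j : ℕ) < m

theorem card_filter_lt_le_apply_le_lehmer {i : Fin N} (hi : (i : ℕ) < m) (hσi : m ≤ (σ i : ℕ)) :
    #{j : Fin N | (j : ℕ) < m ∧ m ≤ (σ j : ℕ)} ≤ lehmer σ i := by
  rw [card_filter_lt_le_apply_eq]
  refine card_le_card fun j hj => ?_
  simp only [mem_filter, mem_univ, true_and] at hj ⊢
  exact ⟨by simp only [Fin.lt_def]; omega, by simp only [Fin.lt_def]; omega⟩

theorem lehmer_le_card_filter_lt_le_apply (hσ : desSet σ ⊆ {m}) {i : Fin N}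
    (hσi : (σ i : ℕ) < m) : lehmer σ i ≤ #{j : Fin N | (j : ℕ) < m ∧ m ≤ (σ j : ℕ)} := by
  rw [card_filter_lt_le_apply_eq]
  refine card_le_card fun j hj => ?_
  simp only [mem_filter, mem_univ, true_and] at hj ⊢
  have hj_second : m ≤ (j : ℕ) := not_lt.1 fun hj' =>
    (apply_le_apply_of_desSet_subset_singleton hσ hj.1.le (.inl hj')).not_gt hj.2
  exact ⟨hj_second, (Fin.lt_def.1 hj.2).trans hσi⟩

theorem le_card_filter_lt_le_apply_of_hasStaircase (hσ : desSet σ ⊆ {m}) {r : ℕ}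
    (hr : hasStaircase (lehmer σ) r) : r ≤ #{j : Fin N | (j : ℕ) < m ∧ m ≤ (σ j : ℕ)} := by
  obtain ⟨f, hf, hst⟩ := hr
  rcases Nat.eq_zero_or_pos r with rfl | hr
  · exact Nat.zero_le _
  have hfirst (k : Fin r) : (f k : ℕ) < m := by
    by_contra! hk
    have := hst k
    rw [lehmer_eq_zero_of_desSet_subset_singleton hσ hk] at this
    omega
  by_cases h0 : m ≤ (σ (f ⟨0, hr⟩) : ℕ)
  · calc r = #(univ : Finset (Fin r)) := (card_fin r).symm
      _ ≤ _ := card_le_card_of_injOn f (fun k _ => mem_filter.2 ⟨mem_univ _, hfirst k,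
          h0.trans <| apply_le_apply_of_desSet_subset_singleton hσ
            (hf.monotone (Fin.le_def.2 k.val.zero_le)) (.inl (hfirst k))⟩) hf.injective.injOn
  · calc r ≤ lehmer σ (f ⟨0, hr⟩) := by have := hst ⟨0, hr⟩; simp only at this; omega
      _ ≤ _ := lehmer_le_card_filter_lt_le_apply σ hσ (not_le.1 h0)

end TwoBlocks

theorem stc_on_two_block_quotient_eq_card_general
    (rho1 N : ℕ)
    (σ : Equiv.Perm (Fin N)) (hσ : desSet (fun i => σ i) ⊆ {rho1}) :
    stcStat (fun i => σ i) =
      (Finset.univ.filter fun i : Fin N => (i : ℕ) < rho1 ∧ rho1 ≤ (σ i : ℕ)).card :=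
  IsGreatest.csSup_eq
    ⟨hasStaircase_card _ fun _ hi =>
        card_filter_lt_le_apply_le_lehmer σ (mem_filter.1 hi).2.1 (mem_filter.1 hi).2.2,
      fun _ hr => le_card_filter_lt_le_apply_of_hasStaircase σ hσ hr⟩

/-- For `ρ = (ρ_1, ρ_2)` and `σ` in the quotient `S_N^{{ρ_1}}`, the statistic `stc σ`
equals the number of positions `i` among the first `ρ_1` (i.e. `(i:ℕ) < ρ_1`) whose value
exceeds `ρ_1` (with `0`-based values: `ρ_1 ≤ σ i`). -/
theorem stc_on_two_block_quotient_eq_card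
    (rho1 rho2 N : ℕ) (h1 : 0 < rho1) (h2 : 0 < rho2) (hN : rho1 + rho2 = N)
    (σ : Equiv.Perm (Fin N)) (hσ : desSet (fun i => σ i) ⊆ {rho1}) :
    stcStat (fun i => σ i) =
      (Finset.univ.filter fun i : Fin N => (i : ℕ) < rho1 ∧ rho1 ≤ (σ i : ℕ)).card :=
  stc_on_two_block_quotient_eq_card_general rho1 N σ hσ
end

section
/- Let r be an odd positive integer, rho = (r,r), N = 2r, and R = {r}. Then the polynomial C_rho(x,q) = sum over w in S_N^R of x^{stc(w)} q^{inv(w)} is divisible by (1 + x q^r) in Z[x,q]. -/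
open Finset

/-! A permutation with no descent outside `r` is determined by the set `A` of its first `r`
values, and every `r`-subset of `Fin n` occurs. In terms of `A`, `inv` counts the pairs
`b < a` with `a ∈ A`, `b ∉ A`, and `stc` is the number `k` of elements of `A` that are `≥ r`:
the first-block positions carrying such a value have Lehmer code `≥ k`, all other positions
have code `≤ k`. Splitting inversions by whether `a` and `b` lie in the same half gives
`inv = s + k²`. For `n = 2r`, swapping the two halves `v ↦ v ± r` preserves `s` and sends `k`
to `r - k`; for odd `r` it has no fixed point, and a pair with `k < r - k` contributes
`xᵏ q^(s+k²) (1 + (x qʳ)ᵈ)` with `d = r - 2k` odd, which `1 + x qʳ` divides. -/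

section DescentSet

variable {α : Type*} [LinearOrder α] {n r : ℕ} {w : Fin n → α}

lemma le_of_desSet_subset_singleton (hdes : desSet w ⊆ {r}) {i j : Fin n} (hij : i ≤ j)
    (hblock : (j : ℕ) < r ∨ r ≤ (i : ℕ)) : w i ≤ w j := by
  obtain ⟨d, hd⟩ := Nat.exists_eq_add_of_le (Fin.le_def.1 hij)
  induction d generalizing j with
  | zero => rw [Fin.ext (hd.trans (add_zero _)).symm]
  | succ d ih =>
    let k : Fin n := ⟨i + d, by omega⟩
    have hkj : (j : ℕ) ∉ desSet w := fun h => by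
      have := mem_singleton.1 (hdes h)
      omega
    simp only [desSet, mem_filter, mem_Ico, not_and, not_exists, not_lt] at hkj
    calc w i ≤ w k := ih (Fin.le_def.2 (by simp [k])) (by simp only [k]; omega) rfl
      _ ≤ w j := by
        convert hkj (by omega) j.2 using 2
        ext
        simp only [k]
        omega

end DescentSet

section Grassmannian

variable {n r : ℕ} {A : Finset (Fin n)}

lemma card_compl_of_card_eq (hA : #A = r) : #Aᶜ = n - r := by
  rw [card_compl, hA, Fintype.card_fin]

def grassmannFun (A : Finset (Fin n)) (hA : #A = r) (i : Fin n) : Fin n :=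
  if h : (i : ℕ) < r then A.orderEmbOfFin hA ⟨i, h⟩
  else Aᶜ.orderEmbOfFin (card_compl_of_card_eq hA) ⟨i - r, by omega⟩

variable (hA : #A = r)

lemma grassmannFun_mem_iff (i : Fin n) : grassmannFun A hA i ∈ A ↔ (i : ℕ) < r := by
  unfold grassmannFun
  split_ifs with h
  · simp [h]
  · simpa [h] using mem_compl.1 (orderEmbOfFin_mem Aᶜ _ _)

lemma grassmannFun_lt {i j : Fin n} (hij : i < j) (hblock : (j : ℕ) < r ∨ r ≤ (i : ℕ)) :
    grassmannFun A hA i < grassmannFun A hA j := by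
  rw [Fin.lt_def] at hij
  unfold grassmannFun
  rcases hblock with hj | hi
  · rw [dif_pos (hij.trans hj), dif_pos hj]
    exact (A.orderEmbOfFin hA).strictMono (Fin.mk_lt_mk.2 hij)
  · rw [dif_neg (by omega), dif_neg (by omega)]
    exact (Aᶜ.orderEmbOfFin _).strictMono (Fin.mk_lt_mk.2 (by omega))

lemma grassmannFun_injective : Function.Injective (grassmannFun A hA) := by
  intro i j hij
  have hblock : (i : ℕ) < r ↔ (j : ℕ) < r := by
    rw [← grassmannFun_mem_iff hA, ← grassmannFun_mem_iff hA, hij]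
  by_contra hne
  rcases lt_or_gt_of_ne hne with h | h
  · exact (grassmannFun_lt hA h (by omega)).ne hij
  · exact (grassmannFun_lt hA h (by omega)).ne hij.symm

lemma desSet_grassmannFun_subset : desSet (grassmannFun A hA) ⊆ {r} := by
  intro i hi
  simp only [desSet, mem_filter, mem_Ico] at hi
  obtain ⟨⟨hi1, -⟩, hin, hdes⟩ := hi
  rw [mem_singleton]
  by_contra hir
  exact hdes.not_gt (grassmannFun_lt hA (Fin.mk_lt_mk.2 (by omega)) (by simp only; omega))

lemma eq_grassmannFun {w : Fin n → Fin n} (hmem : ∀ i, w i ∈ A ↔ (i : ℕ) < r)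
    (hmono : ∀ i j : Fin n, i < j → (j : ℕ) < r ∨ r ≤ (i : ℕ) → w i < w j) :
    grassmannFun A hA = w := by
  funext i
  unfold grassmannFun
  have hrn : r ≤ n := (hA ▸ card_le_univ A).trans_eq (Fintype.card_fin n)
  split_ifs with h
  · have hw : (fun m : Fin r => w ⟨m, by omega⟩) = A.orderEmbOfFin hA :=
      orderEmbOfFin_unique hA (fun m => (hmem _).2 m.2)
        (fun a b hab => hmono _ _ (Fin.mk_lt_mk.2 hab) (Or.inl b.2))
    exact (congrFun hw ⟨i, h⟩).symm
  · have hw : (fun m : Fin (n - r) => w ⟨r + m, by omega⟩) = Aᶜ.orderEmbOfFin _ :=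
      orderEmbOfFin_unique (card_compl_of_card_eq hA)
        (fun m => mem_compl.2 fun hm => by simpa using (hmem _).1 hm)
        (fun a b hab => hmono _ _ (Fin.mk_lt_mk.2 (Nat.add_lt_add_left hab r))
          (Or.inr (Nat.le_add_right _ _)))
    rw [← congrFun hw ⟨i - r, by omega⟩]
    congr
    simp only
    omega

noncomputable def grassmannPerm : Equiv.Perm (Fin n) :=
  Equiv.ofBijective (grassmannFun A hA)
    (Finite.injective_iff_bijective.mp (grassmannFun_injective hA))

lemma coe_grassmannPerm : ⇑(grassmannPerm hA) = grassmannFun A hA := rfl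

lemma grassmannFun_grassmannPerm_symm_apply (v : Fin n) :
    grassmannFun A hA ((grassmannPerm hA).symm v) = v :=
  (grassmannPerm hA).apply_symm_apply v

def initialValues (r : ℕ) (σ : Equiv.Perm (Fin n)) : Finset (Fin n) :=
  ({i : Fin n | (i : ℕ) < r} : Finset (Fin n)).map σ.toEmbedding

lemma apply_mem_initialValues_iff (σ : Equiv.Perm (Fin n)) (i : Fin n) :
    σ i ∈ initialValues r σ ↔ (i : ℕ) < r := by
  simp [initialValues]

lemma card_initialValues (hr : r ≤ n) (σ : Equiv.Perm (Fin n)) : #(initialValues r σ) = r := by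
  rw [initialValues, card_map, Fin.card_filter_val_lt, min_eq_right hr]

lemma initialValues_grassmannPerm : initialValues r (grassmannPerm hA) = A := by
  ext v
  rw [← (grassmannPerm hA).apply_symm_apply v, apply_mem_initialValues_iff, coe_grassmannPerm,
    grassmannFun_mem_iff]

lemma grassmannPerm_initialValues {σ : Equiv.Perm (Fin n)} (hdes : desSet (fun i => σ i) ⊆ {r})
    (hσ : #(initialValues r σ) = r) : grassmannPerm hσ = σ := by
  refine Equiv.coe_fn_injective (eq_grassmannFun hσ (apply_mem_initialValues_iff σ) ?_)
  intro i j hij hblock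
  exact (le_of_desSet_subset_singleton hdes hij.le hblock).lt_of_ne (σ.injective.ne hij.ne)

end Grassmannian

section Statistics

variable {n r : ℕ} {A : Finset (Fin n)}

def largeCount (r : ℕ) (A : Finset (Fin n)) : ℕ := #{a ∈ A | r ≤ a.val}

def crossInv (A : Finset (Fin n)) : ℕ := #{p ∈ A ×ˢ Aᶜ | p.2 < p.1}

lemma card_compl_filter_lt (hA : #A = r) : #{b ∈ Aᶜ | b.val < r} = largeCount r A := by
  have hsmall : #{b ∈ A | b.val < r} + #{b ∈ Aᶜ | b.val < r} = r := by
    rw [← card_union_of_disjoint (disjoint_filter_filter disjoint_compl_right), ← filter_union,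
      union_compl, Fin.card_filter_val_lt,
      min_eq_right ((hA ▸ card_le_univ A).trans_eq (Fintype.card_fin n))]
  have hsplit := card_filter_add_card_filter_not (s := A) (fun b : Fin n => (b : ℕ) < r)
  simp only [not_lt] at hsplit
  rw [largeCount]
  omega

def sameBlockInv (r : ℕ) (A : Finset (Fin n)) : ℕ :=
  #{p ∈ A ×ˢ Aᶜ | p.2 < p.1 ∧ (p.1.val < r ↔ p.2.val < r)}

lemma crossInv_eq_sameBlockInv_add_sq (hA : #A = r) :
    crossInv A = sameBlockInv r A + largeCount r A ^ 2 := by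
  have hcross : {p ∈ A ×ˢ Aᶜ | p.2 < p.1 ∧ ¬(p.1.val < r ↔ p.2.val < r)} =
      {a ∈ A | r ≤ a.val} ×ˢ {b ∈ Aᶜ | b.val < r} := by
    ext ⟨a, b⟩
    simp only [mem_filter, mem_product, Fin.lt_def]
    constructor
    · rintro ⟨⟨ha, hb⟩, hlt, hblock⟩
      exact ⟨⟨ha, by omega⟩, hb, by omega⟩
    · rintro ⟨⟨ha, har⟩, hb, hbr⟩
      exact ⟨⟨ha, hb⟩, by omega, by omega⟩
  rw [crossInv, sameBlockInv, ← card_filter_add_card_filter_not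
    (p := fun p : Fin n × Fin n => (p.1.val < r ↔ p.2.val < r)), filter_filter, filter_filter,
    hcross, card_product, card_compl_filter_lt hA, largeCount, sq]

variable (hA : #A = r)

lemma grassmannFun_inversion_iff {i j : Fin n} :
    i < j ∧ grassmannFun A hA j < grassmannFun A hA i ↔
      (grassmannFun A hA i ∈ A ∧ grassmannFun A hA j ∉ A) ∧
        grassmannFun A hA j < grassmannFun A hA i := by
  rw [grassmannFun_mem_iff, grassmannFun_mem_iff]
  constructor
  · rintro ⟨hij, hinv⟩
    by_contra hblock
    exact hinv.not_gt (grassmannFun_lt hA hij (by omega))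
  · rintro ⟨⟨hi, hj⟩, hinv⟩
    exact ⟨Fin.lt_def.2 (by omega), hinv⟩

lemma invStat_grassmannFun : invStat (grassmannFun A hA) = crossInv A := by
  set e := grassmannPerm hA
  refine card_nbij' (Prod.map e e) (Prod.map e.symm e.symm) ?_ ?_ ?_ ?_
  · rintro ⟨i, j⟩ h
    simp only [coe_filter, mem_univ, true_and, Set.mem_ofPred_eq, mem_product, mem_compl] at h ⊢
    exact (grassmannFun_inversion_iff hA).1 h
  · rintro ⟨a, b⟩ h
    simp only [coe_filter, mem_univ, true_and, Set.mem_ofPred_eq, mem_product, mem_compl] at h ⊢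
    rw [← grassmannFun_grassmannPerm_symm_apply hA a,
      ← grassmannFun_grassmannPerm_symm_apply hA b] at h
    exact (grassmannFun_inversion_iff hA).2 h
  · exact fun p _ => Prod.ext (e.symm_apply_apply _) (e.symm_apply_apply _)
  · exact fun p _ => Prod.ext (e.apply_symm_apply _) (e.apply_symm_apply _)

lemma lehmer_grassmannFun_of_le {i : Fin n} (hi : r ≤ (i : ℕ)) :
    lehmer (grassmannFun A hA) i = 0 := by
  rw [lehmer, card_eq_zero, filter_eq_empty_iff]
  intro j _ hinv
  have := ((grassmannFun_inversion_iff hA).1 hinv).1.1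
  rw [grassmannFun_mem_iff] at this
  omega

lemma lehmer_grassmannFun_of_lt {i : Fin n} (hi : (i : ℕ) < r) :
    lehmer (grassmannFun A hA) i = #{b ∈ Aᶜ | b < grassmannFun A hA i} := by
  have hwi : grassmannFun A hA i ∈ A := (grassmannFun_mem_iff hA i).2 hi
  set e := grassmannPerm hA
  refine card_nbij' e e.symm ?_ ?_ (fun j _ => e.symm_apply_apply j)
    (fun b _ => e.apply_symm_apply b)
  · intro j h
    simp only [coe_filter, mem_univ, true_and, Set.mem_ofPred_eq, mem_compl] at h ⊢
    exact ⟨((grassmannFun_inversion_iff hA).1 h).1.2, h.2⟩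
  · intro b h
    simp only [coe_filter, mem_univ, true_and, Set.mem_ofPred_eq, mem_compl] at h ⊢
    rw [← grassmannFun_grassmannPerm_symm_apply hA b] at h
    exact (grassmannFun_inversion_iff hA).2 ⟨⟨hwi, h.1⟩, h.2⟩

lemma lehmer_grassmannFun_le_largeCount {i : Fin n} (hi : (i : ℕ) < r)
    (hw : (grassmannFun A hA i : ℕ) < r) : lehmer (grassmannFun A hA) i ≤ largeCount r A := by
  rw [lehmer_grassmannFun_of_lt hA hi, ← card_compl_filter_lt hA]
  exact card_le_card (monotone_filter_right _ fun b _ hb => (Fin.lt_def.1 hb).trans hw)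

lemma largeCount_le_lehmer_grassmannFun {i : Fin n} (hi : (i : ℕ) < r)
    (hw : r ≤ (grassmannFun A hA i : ℕ)) : largeCount r A ≤ lehmer (grassmannFun A hA) i := by
  rw [lehmer_grassmannFun_of_lt hA hi, ← card_compl_filter_lt hA]
  exact card_le_card (monotone_filter_right _ fun b _ hb => Fin.lt_def.2 (lt_of_lt_of_le hb hw))

noncomputable def largePositions : Finset (Fin n) :=
  {a ∈ A | r ≤ a.val}.map (grassmannPerm hA).symm.toEmbedding

lemma card_largePositions : #(largePositions hA) = largeCount r A := card_map _

lemma mem_largePositions {i : Fin n} :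
    i ∈ largePositions hA ↔ (i : ℕ) < r ∧ r ≤ (grassmannFun A hA i : ℕ) := by
  rw [largePositions, mem_map_equiv, Equiv.symm_symm, mem_filter, coe_grassmannPerm,
    grassmannFun_mem_iff]

lemma le_largeCount_of_hasStaircase {m : ℕ} (hm : hasStaircase (lehmer (grassmannFun A hA)) m) :
    m ≤ largeCount r A := by
  obtain ⟨f, hf, hstair⟩ := hm
  by_contra! hlt
  have hfirst : ∀ j, (f j : ℕ) < r := fun j => by
    by_contra! h
    have := hstair j
    rw [lehmer_grassmannFun_of_le hA h] at this
    omega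
  let j₀ : Fin m := ⟨0, by omega⟩
  have hlarge₀ : r ≤ (grassmannFun A hA (f j₀) : ℕ) := by
    by_contra! h
    have := hstair j₀
    have := lehmer_grassmannFun_le_largeCount hA (hfirst j₀) h
    simp only [j₀] at *
    omega
  have hmem : ∀ j, f j ∈ largePositions hA := fun j => by
    refine (mem_largePositions hA).2 ⟨hfirst j, ?_⟩
    rcases (Fin.le_def.2 (Nat.zero_le _) : j₀ ≤ j).eq_or_lt with h | h
    · exact h ▸ hlarge₀
    · exact hlarge₀.trans (grassmannFun_lt hA (hf h) (Or.inl (hfirst j))).le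
  have := card_le_card_of_injOn (s := univ) f (fun j _ => hmem j) hf.injective.injOn
  rw [card_univ, Fintype.card_fin, card_largePositions] at this
  omega

lemma hasStaircase_of_card_eq {c : Fin n → ℕ} {T : Finset (Fin n)} {k : ℕ} (hT : #T = k)
    (hc : ∀ i ∈ T, k ≤ c i) : hasStaircase c k :=
  ⟨T.orderEmbOfFin hT, (T.orderEmbOfFin hT).strictMono, fun j => by
    have := hc _ (orderEmbOfFin_mem T hT j)
    omega⟩

lemma stcStat_grassmannFun : stcStat (grassmannFun A hA) = largeCount r A := by
  refine IsGreatest.csSup_eq ⟨hasStaircase_of_card_eq (card_largePositions hA) fun i hi => ?_,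
    fun m hm => le_largeCount_of_hasStaircase hA hm⟩
  obtain ⟨hi, hw⟩ := (mem_largePositions hA).1 hi
  exact largeCount_le_lehmer_grassmannFun hA hi hw

end Statistics

theorem sum_quotientByR_singleton {M : Type*} [AddCommMonoid M] {n r : ℕ} (hr : r ≤ n)
    (f : ℕ → ℕ → M) :
    ∑ σ ∈ quotientByR n {r}, f (stcStat fun i => σ i) (invStat fun i => σ i) =
      ∑ A ∈ powersetCard r (univ : Finset (Fin n)), f (largeCount r A) (crossInv A) := by
  symm
  refine sum_bij' (fun A hA => grassmannPerm (mem_powersetCard.1 hA).2)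
    (fun σ _ => initialValues r σ) (fun A _ => ?_) (fun σ _ => ?_) (fun A _ => ?_)
    (fun σ hσ => ?_) (fun A _ => ?_)
  · exact mem_filter.2 ⟨mem_univ _, desSet_grassmannFun_subset _⟩
  · exact mem_powersetCard.2 ⟨subset_univ _, card_initialValues hr σ⟩
  · exact initialValues_grassmannPerm _
  · exact grassmannPerm_initialValues (mem_filter.1 hσ).2 _
  · exact congrArg₂ f (stcStat_grassmannFun _).symm (invStat_grassmannFun _).symm

section HalfSwap

def halfSwap (r : ℕ) : Equiv.Perm (Fin (2 * r)) :=
  Function.Involutive.toPerm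
    (fun v => ⟨if v.val < r then v.val + r else v.val - r, by split <;> omega⟩)
    (fun v => by ext; dsimp only; split_ifs <;> omega)

variable {r : ℕ} {A : Finset (Fin (2 * r))}

lemma halfSwap_val (v : Fin (2 * r)) :
    (halfSwap r v).val = if v.val < r then v.val + r else v.val - r := rfl

lemma halfSwap_symm : (halfSwap r).symm = halfSwap r := Function.Involutive.toPerm_symm _

lemma halfSwap_halfSwap (v : Fin (2 * r)) : halfSwap r (halfSwap r v) = v :=
  Function.Involutive.toPerm_involutive _ v

lemma mem_map_halfSwap {v : Fin (2 * r)} :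
    v ∈ A.map (halfSwap r).toEmbedding ↔ halfSwap r v ∈ A := by
  rw [mem_map_equiv, halfSwap_symm]

lemma map_halfSwap_map_halfSwap (A : Finset (Fin (2 * r))) :
    (A.map (halfSwap r).toEmbedding).map (halfSwap r).toEmbedding = A := by
  ext v
  rw [mem_map_halfSwap, mem_map_halfSwap, halfSwap_halfSwap]

lemma largeCount_map_halfSwap_add (hA : #A = r) :
    largeCount r (A.map (halfSwap r).toEmbedding) + largeCount r A = r := by
  have hsmall : largeCount r (A.map (halfSwap r).toEmbedding) = #{a ∈ A | a.val < r} := by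
    rw [largeCount, filter_map, card_map]
    congr 1
    refine filter_congr fun a _ => ?_
    simp only [Function.comp_apply, Equiv.coe_toEmbedding, halfSwap_val]
    split_ifs <;> omega
  have hsplit := card_filter_add_card_filter_not (s := A) (fun a => a.val < r)
  simp only [not_lt] at hsplit
  rw [hsmall, largeCount]
  omega

lemma halfSwap_lt_halfSwap_and_sameBlock_iff (a b : Fin (2 * r)) :
    (halfSwap r b < halfSwap r a ∧ ((halfSwap r a).val < r ↔ (halfSwap r b).val < r)) ↔
      (b < a ∧ (a.val < r ↔ b.val < r)) := by
  simp only [Fin.lt_def, halfSwap_val]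
  split_ifs <;> omega

lemma sameBlockInv_map_halfSwap :
    sameBlockInv r (A.map (halfSwap r).toEmbedding) = sameBlockInv r A := by
  rw [sameBlockInv, sameBlockInv, ← card_map ((halfSwap r).prodCongr (halfSwap r)).toEmbedding]
  congr 1
  ext ⟨a, b⟩
  rw [mem_map_equiv]
  simp only [Equiv.prodCongr_symm, halfSwap_symm, Equiv.prodCongr_apply, Prod.map, mem_filter,
    mem_product, mem_compl, mem_map_halfSwap, halfSwap_halfSwap,
    halfSwap_lt_halfSwap_and_sameBlock_iff]

end HalfSwap

lemma dvd_sum_of_involution {ι R : Type*} [CommRing R] {s : Finset ι} {f : ι → R} {d : R}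
    (g : ι → ι) (hdvd : ∀ a ∈ s, d ∣ f a + f (g a)) (hne : ∀ a ∈ s, g a ≠ a)
    (hmem : ∀ a ∈ s, g a ∈ s) (hgg : ∀ a ∈ s, g (g a) = a) : d ∣ ∑ a ∈ s, f a := by
  rw [← Ideal.Quotient.eq_zero_iff_dvd, map_sum]
  refine sum_involution (fun a _ => g a) (fun a ha => ?_) (fun a ha _ => hne a ha) hmem hgg
  rw [← map_add, Ideal.Quotient.eq_zero_iff_dvd]
  exact hdvd a ha

lemma one_add_mul_pow_dvd {R : Type*} [CommRing R] (x q : R) {r k k' : ℕ} (hr : Odd r)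
    (hk : k + k' = r) (s : ℕ) :
    1 + x * q ^ r ∣ x ^ k * q ^ (s + k ^ 2) + x ^ k' * q ^ (s + k' ^ 2) := by
  wlog hle : k ≤ k' generalizing k k'
  · rw [add_comm (x ^ k * _)]
    exact this (by omega) (by omega)
  obtain ⟨d, rfl⟩ := Nat.exists_eq_add_of_le hle
  have hd : Odd d := by
    rw [Nat.odd_iff] at hr ⊢
    omega
  have hfactor : x ^ k * q ^ (s + k ^ 2) + x ^ (k + d) * q ^ (s + (k + d) ^ 2) =
      x ^ k * q ^ (s + k ^ 2) * (1 + (x * q ^ r) ^ d) := by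
    rw [← hk]
    ring
  rw [hfactor]
  exact Dvd.dvd.mul_left (by simpa using Odd.add_dvd_pow_add_pow 1 (x * q ^ r) hd) _

/-- For odd `r` and `ρ = (r, r)`, the polynomial
`C_ρ(x,q) = ∑_{σ ∈ S_{2r}^{{r}}} x^{stc σ} q^{inv σ}` is divisible by `1 + x qʳ`. -/
theorem one_add_x_q_pow_r_dvd_C_rho (r : ℕ) (hr : Odd r) :
    ∃ g : PP,
      (∑ σ ∈ quotientByR (2 * r) {r},
          xP ^ stcStat (fun i => σ i) * qP ^ invStat (fun i => σ i)) =
        (1 + xP * qP ^ r) * g := by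
  rw [sum_quotientByR_singleton (by omega) fun k i => xP ^ k * qP ^ i]
  refine dvd_sum_of_involution (fun A => A.map (halfSwap r).toEmbedding) (fun A hAs => ?_)
    (fun A hAs hfix => ?_) (fun A hAs => ?_) (fun A _ => map_halfSwap_map_halfSwap A)
  · have hA := (mem_powersetCard.1 hAs).2
    rw [crossInv_eq_sameBlockInv_add_sq hA,
      crossInv_eq_sameBlockInv_add_sq ((card_map _).trans hA), sameBlockInv_map_halfSwap]
    exact one_add_mul_pow_dvd xP qP hr ((add_comm _ _).trans (largeCount_map_halfSwap_add hA)) _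
  · have hk := largeCount_map_halfSwap_add (mem_powersetCard.1 hAs).2
    rw [hfix] at hk
    exact Nat.not_even_iff_odd.2 hr ⟨_, hk.symm⟩
  · exact mem_powersetCard.2 ⟨subset_univ _, (card_map _).trans (mem_powersetCard.1 hAs).2⟩
end

section
/- The decomposition identity: sum over sigma in B_n of x^{nstc(sigma)} q^{ell(sigma)} = A_n(x,q) * product over i = 1 to n of (1 + x q^i), where A_n(x,q) = sum over tau in S_n of x^{stc(tau)} q^{inv(tau)}. -/
open Finset

/-- Number of negative entries of a word. -/
def negStat {n : ℕ} (w : Fin n → ℤ) : ℕ := (Finset.univ.filter fun i => w i < 0).card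

/-- Number of negative sum pairs of a word. -/
def nspStat {n : ℕ} (w : Fin n → ℤ) : ℕ :=
  ((Finset.univ : Finset (Fin n × Fin n)).filter fun p => p.1 < p.2 ∧ w p.1 + w p.2 < 0).card

/-- The hyperoctahedral group `B_n`, encoded as pairs (permutation, signs). -/
abbrev SignedPerm (n : ℕ) := Equiv.Perm (Fin n) × (Fin n → Bool)

/-- The window `σ(1) ⋯ σ(n) ∈ {±1, …, ±n}ⁿ` of a signed permutation. -/
def sgnWord {n : ℕ} (σ : SignedPerm n) : Fin n → ℤ :=
  fun i => if σ.2 i then -((σ.1 i : ℤ) + 1) else (σ.1 i : ℤ) + 1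

/-- The type `B` Coxeter length, via its combinatorial description
`ℓ(σ) = inv(σ) + neg(σ) + nsp(σ)`. -/
def lenB {n : ℕ} (σ : SignedPerm n) : ℕ :=
  invStat (sgnWord σ) + negStat (sgnWord σ) + nspStat (sgnWord σ)

/-- `nstc(σ) = stc(σ) + neg(σ)`; here `stc` of a signed permutation is Skandera's
statistic of its window (equivalently, of the ordinary permutation with the same
relative order of values, since the Lehmer code only depends on relative order). -/
noncomputable def nstc {n : ℕ} (σ : SignedPerm n) : ℕ :=
  stcStat (sgnWord σ) + negStat (sgnWord σ)

/-- `ndes(σ) = des(σ) + neg(σ)`. -/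
def ndes {n : ℕ} (σ : SignedPerm n) : ℕ := desStat (sgnWord σ) + negStat (sgnWord σ)

/-- `nmaj(σ) = maj(σ) - ∑_{i ∈ Neg σ} σ(i)`. -/
def nmaj {n : ℕ} (σ : SignedPerm n) : ℕ :=
  majStat (sgnWord σ) +
    ∑ i ∈ Finset.univ.filter (fun i : Fin n => sgnWord σ i < 0), (sgnWord σ i).natAbs

/-!
Write `σ ∈ B_n` as `(π, b ∘ π)`, where `b` marks the negated values. Its window is then
`w_b ∘ π`, with `w_b = (±1, …, ±n)` carrying the signs `b`. Counting negative entries and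
negative-sum pairs ignores the order of positions, so `neg` and `nsp` are those of `w_b`:
`|b|` and `∑_{j ∈ b} (j - 1)`. On the other hand `inv` and `stc` only see the relative order
of the window, which is that of `ρ_b ∘ π` for the permutation `ρ_b` ranking the entries of
`w_b`. For fixed `b`, the sum over `π` is therefore `A_n(x,q) ∏_{j ∈ b} x qʲ`, and summing
over `b` expands the product `∏ (1 + x qʲ)`.
-/

section OrderInvariance

variable {α β : Type*} [LinearOrder α] [LinearOrder β] {n : ℕ}

theorem lehmer_congr {w : Fin n → α} {w' : Fin n → β} (h : ∀ i j, w i < w j ↔ w' i < w' j) :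
    lehmer w = lehmer w' := by
  funext i
  simp only [lehmer, h]

theorem stcStat_congr {w : Fin n → α} {w' : Fin n → β} (h : ∀ i j, w i < w j ↔ w' i < w' j) :
    stcStat w = stcStat w' := by
  rw [stcStat, stcStat, lehmer_congr h]

theorem invStat_congr {w : Fin n → α} {w' : Fin n → β} (h : ∀ i j, w i < w j ↔ w' i < w' j) :
    invStat w = invStat w' := by
  simp only [invStat, h]

theorem exists_perm_lt_iff_of_injective {f : Fin n → α} (hf : Function.Injective f) :
    ∃ ρ : Equiv.Perm (Fin n), ∀ i j, f i < f j ↔ ρ i < ρ j := by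
  have hmono : StrictMono (f ∘ Tuple.sort f) :=
    (Tuple.monotone_sort f).strictMono_of_injective (hf.comp (Tuple.sort f).injective)
  refine ⟨(Tuple.sort f).symm, fun i j => ?_⟩
  simpa using hmono.lt_iff_lt (a := (Tuple.sort f).symm i) (b := (Tuple.sort f).symm j)

end OrderInvariance

theorem two_mul_card_filter_lt_eq_card_filter_ne {ι : Type*} [Fintype ι] [LinearOrder ι]
    (r : ι → ι → Prop) [DecidableRel r] (hr : ∀ i j, r i j → r j i) :
    2 * #{p : ι × ι | p.1 < p.2 ∧ r p.1 p.2} = #{p : ι × ι | p.1 ≠ p.2 ∧ r p.1 p.2} := by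
  have hsplit : univ.filter (fun p : ι × ι => p.1 ≠ p.2 ∧ r p.1 p.2) =
      univ.filter (fun p : ι × ι => p.1 < p.2 ∧ r p.1 p.2) ∪
        univ.filter (fun p : ι × ι => p.2 < p.1 ∧ r p.1 p.2) := by
    rw [← filter_or]
    simp only [ne_iff_lt_or_gt, or_and_right]
  have hswap : #{p : ι × ι | p.2 < p.1 ∧ r p.1 p.2} = #{p : ι × ι | p.1 < p.2 ∧ r p.1 p.2} :=
    card_equiv (Equiv.prodComm ι ι) fun p => by
      simp only [mem_filter, mem_univ, true_and, Equiv.prodComm_apply, Prod.fst_swap,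
        Prod.snd_swap]
      exact and_congr_right fun _ => ⟨hr _ _, hr _ _⟩
  rw [hsplit, card_union_of_disjoint, hswap, two_mul]
  exact disjoint_filter.mpr fun p _ h h' => lt_asymm h.1 h'.1

theorem sum_prod_filter_eq_prod_one_add {R ι : Type*} [CommSemiring R] [Fintype ι]
    [DecidableEq ι] (a : ι → R) :
    ∑ b : ι → Bool, ∏ j ∈ {j | b j = true}, a j = ∏ j, (1 + a j) := by
  calc ∑ b : ι → Bool, ∏ j ∈ {j | b j = true}, a j
      = ∏ j, ∑ c : Bool, if c = true then a j else 1 := by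
        simp only [prod_filter, Fintype.prod_sum]
    _ = ∏ j, (1 + a j) := by simp [add_comm]

section SignedWords

variable {n : ℕ}

theorem negStat_comp_perm (w : Fin n → ℤ) (π : Equiv.Perm (Fin n)) :
    negStat (w ∘ π) = negStat w :=
  card_equiv π fun i => by simp

theorem nspStat_comp_perm (w : Fin n → ℤ) (π : Equiv.Perm (Fin n)) :
    nspStat (w ∘ π) = nspStat w := by
  have hsymm (v : Fin n → ℤ) (i j : Fin n) (h : v i + v j < 0) : v j + v i < 0 := by
    rwa [add_comm]
  apply Nat.eq_of_mul_eq_mul_left two_pos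
  rw [nspStat, nspStat, two_mul_card_filter_lt_eq_card_filter_ne _ (hsymm _),
    two_mul_card_filter_lt_eq_card_filter_ne _ (hsymm _)]
  exact card_equiv (π.prodCongr π) fun p => by simp

theorem sgnWord_mk_comp (π : Equiv.Perm (Fin n)) (b : Fin n → Bool) :
    sgnWord (π, b ∘ π) = sgnWord (1, b) ∘ π :=
  rfl

theorem natAbs_sgnWord_one (b : Fin n → Bool) (j : Fin n) :
    (sgnWord (1, b) j).natAbs = j + 1 := by
  simp only [sgnWord, Equiv.Perm.one_apply]
  split <;> omega

theorem sgnWord_one_neg_iff (b : Fin n → Bool) (j : Fin n) :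
    sgnWord (1, b) j < 0 ↔ b j = true := by
  simp only [sgnWord, Equiv.Perm.one_apply]
  split <;> simp_all <;> omega

theorem sgnWord_one_injective (b : Fin n → Bool) : Function.Injective (sgnWord (1, b)) :=
  fun i j h => Fin.ext <| by
    have := congrArg Int.natAbs h
    rwa [natAbs_sgnWord_one, natAbs_sgnWord_one, add_left_inj] at this

theorem negStat_sgnWord_one (b : Fin n → Bool) :
    negStat (sgnWord (1, b)) = #{j | b j = true} := by
  simp only [negStat, sgnWord_one_neg_iff]

theorem nspStat_sgnWord_one (b : Fin n → Bool) :
    nspStat (sgnWord (1, b)) = ∑ j ∈ {j | b j = true}, (j : ℕ) := by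
  -- the entries of `sgnWord (1, b)` increase in absolute value
  have hneg {k j : Fin n} (hkj : k < j) :
      sgnWord (1, b) k + sgnWord (1, b) j < 0 ↔ b j = true := by
    rw [Fin.lt_def] at hkj
    simp only [sgnWord, Equiv.Perm.one_apply]
    split <;> split <;> simp_all <;> omega
  calc nspStat (sgnWord (1, b)) = #{p : Fin n × Fin n | p.1 < p.2 ∧ b p.2 = true} :=
        congrArg card <| filter_congr fun p _ => and_congr_right hneg
    _ = ∑ j ∈ {j | b j = true}, #{k : Fin n | k < j} := by
        rw [card_filter, Fintype.sum_prod_type, sum_comm, sum_filter]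
        refine sum_congr rfl fun j _ => ?_
        split_ifs with hj <;> simp [hj]
    _ = ∑ j ∈ {j | b j = true}, (j : ℕ) := by
        simp [filter_gt_eq_Iio]

theorem sum_signedPerm_eq_sum_sum_comp {M : Type*} [AddCommMonoid M] (f : SignedPerm n → M) :
    ∑ σ, f σ = ∑ b : Fin n → Bool, ∑ π : Equiv.Perm (Fin n), f (π, b ∘ π) := by
  rw [sum_comm, Fintype.sum_prod_type]
  exact sum_congr rfl fun π _ => (Equiv.sum_comp (π.symm.arrowCongr (Equiv.refl Bool)) _).symm

variable {π ρ : Equiv.Perm (Fin n)} {b : Fin n → Bool}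

theorem nstc_mk_comp (hρ : ∀ i j, sgnWord (1, b) i < sgnWord (1, b) j ↔ ρ i < ρ j) :
    nstc (π, b ∘ π) = stcStat (fun i => (ρ * π) i) + #{j | b j = true} := by
  rw [nstc, sgnWord_mk_comp, negStat_comp_perm, negStat_sgnWord_one,
    stcStat_congr (w := sgnWord (1, b) ∘ π) fun i j => hρ (π i) (π j)]
  rfl

theorem lenB_mk_comp (hρ : ∀ i j, sgnWord (1, b) i < sgnWord (1, b) j ↔ ρ i < ρ j) :
    lenB (π, b ∘ π) =
      invStat (fun i => (ρ * π) i) + ∑ j ∈ {j | b j = true}, ((j : ℕ) + 1) := by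
  rw [lenB, sgnWord_mk_comp, negStat_comp_perm, nspStat_comp_perm, negStat_sgnWord_one,
    nspStat_sgnWord_one, invStat_congr (w := sgnWord (1, b) ∘ π) fun i j => hρ (π i) (π j),
    sum_add_distrib, card_eq_sum_ones]
  simp only [Equiv.Perm.mul_apply]
  ring

end SignedWords

/-- The polynomial `A_n(x,q)`. -/
noncomputable def stcInvPoly (n : ℕ) : PP :=
  ∑ τ : Equiv.Perm (Fin n), xP ^ stcStat (fun i => τ i) * qP ^ invStat (fun i => τ i)

theorem sum_perm_mk_comp_eq (n : ℕ) (b : Fin n → Bool) :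
    ∑ π : Equiv.Perm (Fin n), xP ^ nstc (π, b ∘ π) * qP ^ lenB (π, b ∘ π) =
      stcInvPoly n * ∏ j ∈ {j | b j = true}, xP * qP ^ ((j : ℕ) + 1) := by
  obtain ⟨ρ, hρ⟩ := exists_perm_lt_iff_of_injective (sgnWord_one_injective b)
  have hreindex : ∑ π : Equiv.Perm (Fin n),
      xP ^ stcStat (fun i => (ρ * π) i) * qP ^ invStat (fun i => (ρ * π) i) = stcInvPoly n :=
    Equiv.sum_comp (Equiv.mulLeft ρ) fun τ =>
      xP ^ stcStat (fun i => τ i) * qP ^ invStat (fun i => τ i)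
  calc ∑ π : Equiv.Perm (Fin n), xP ^ nstc (π, b ∘ π) * qP ^ lenB (π, b ∘ π)
      = ∑ π : Equiv.Perm (Fin n),
          xP ^ stcStat (fun i => (ρ * π) i) * qP ^ invStat (fun i => (ρ * π) i) *
            (xP ^ #{j | b j = true} * qP ^ ∑ j ∈ {j | b j = true}, ((j : ℕ) + 1)) :=
        sum_congr rfl fun π _ => by rw [nstc_mk_comp hρ, lenB_mk_comp hρ]; ring
    _ = stcInvPoly n * ∏ j ∈ {j | b j = true}, xP * qP ^ ((j : ℕ) + 1) := by
        rw [← sum_mul, hreindex, prod_mul_distrib, prod_const, prod_pow_eq_pow_sum]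

/-- `∑_{σ ∈ B_n} x^{nstc σ} q^{ℓ σ} = A_n(x,q) ∏_{i=1}^n (1 + x qⁱ)`, where
`A_n(x,q) = ∑_{τ ∈ S_n} x^{stc τ} q^{inv τ}`. -/
theorem nstc_len_product_formula (n : ℕ) :
    ∑ σ : SignedPerm n, xP ^ nstc σ * qP ^ lenB σ =
      (∑ τ : Equiv.Perm (Fin n),
          xP ^ stcStat (fun i => τ i) * qP ^ invStat (fun i => τ i)) *
        ∏ i ∈ Finset.range n, (1 + xP * qP ^ (i + 1)) := by
  rw [sum_signedPerm_eq_sum_sum_comp, sum_congr rfl fun b _ => sum_perm_mk_comp_eq n b,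
    ← mul_sum, sum_prod_filter_eq_prod_one_add,
    Fin.prod_univ_eq_prod_range (fun j => 1 + xP * qP ^ (j + 1))]
  rfl
end
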